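/- Applicative similarity for the fine-grain call-by-value combinatory logic xCL_fg is sound for the contextual preorder: for all terms p,q of the same sort, if p ≲app q then p ≲ctx q. -/

import Mathlib

namespace FG

mutual
/-- Values of the fine-grain call-by-value combinatory logic xCL_fg. -/
inductive V : Type
  | I : V
  | K : V
  | S : V
  | K1 (t : C) : V
  | S1 (t : C) : V
  | S2 (s t : C) : V
/-- Computations of xCL_fg. -/
inductive C : Type
  | ret (v : V) : C            -- [v]
  | bull (t s : C) : C         -- t • s
  | rtri (v : V) (s : C) : C   -- v ▷ s
  | ltri (t : C) (v : V) : C   -- t ◁ v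
  | circ (v w : V) : C         -- v ∘ w
end

/-- Labeled transitions `v —u→ t` from values to computations (`LStep v u t`). -/
inductive LStep : V → V → C → Prop
  | S (v : V) : LStep .S v (.ret (.S1 (.ret v)))
  | S1 (t : C) (v : V) : LStep (.S1 t) v (.ret (.S2 t (.ret v)))
  | S2 (t s : C) (v : V) : LStep (.S2 t s) v (.bull (.ltri t v) (.ltri s v))
  | K (v : V) : LStep .K v (.ret (.K1 (.ret v)))
  | K1 (t : C) (v : V) : LStep (.K1 t) v t
  | I (v : V) : LStep .I v (.ret v)

/-- Unlabeled transitions from computations to values: `t → v`. -/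
inductive StepV : C → V → Prop
  | ret (v : V) : StepV (.ret v) v

/-- Unlabeled transitions from computations to computations: `t → t'`. -/
inductive StepC : C → C → Prop
  | bullL {t t' : C} (s : C) : StepC t t' → StepC (.bull t s) (.bull t' s)
  | bullV {t : C} {v : V} (s : C) : StepV t v → StepC (.bull t s) (.rtri v s)
  | ltriL {t t' : C} (v : V) : StepC t t' → StepC (.ltri t v) (.ltri t' v)
  | ltriV {t : C} {v : V} (w : V) : StepV t v → StepC (.ltri t w) (.circ v w)
  | rtriR {s s' : C} (v : V) : StepC s s' → StepC (.rtri v s) (.rtri v s')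
  | rtriV {s : C} {w : V} (v : V) : StepV s w → StepC (.rtri v s) (.circ v w)
  | circ {v w : V} {t : C} : LStep v w t → StepC (.circ v w) t

/-- `t ⇒ t'` between computations. -/
def StepsC : C → C → Prop := Relation.ReflTransGen StepC

/-- `t ⇒ v`: `t` reduces in finitely many steps to the value `v`. -/
def StepsV (t : C) (v : V) : Prop := ∃ t', StepsC t t' ∧ StepV t' v

/-- `t⇓`: the computation `t` reduces to some value. -/
def ConvC (t : C) : Prop := ∃ v, StepsV t v

/-- Applicative simulations for xCL_fg. -/
def IsSim (RV : V → V → Prop) (RC : C → C → Prop) : Prop :=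
  (∀ v w, RV v w → ∀ u t, LStep v u t → ∃ s, LStep w u s ∧ RC t s) ∧
  (∀ t s, RC t s →
    (∀ v, StepV t v → ∃ w, StepsV s w ∧ RV v w) ∧
    (∀ t', StepC t t' → ∃ s', StepsC s s' ∧ RC t' s'))

/-- Applicative similarity on values. -/
def AppSimV (v w : V) : Prop := ∃ RV RC, IsSim RV RC ∧ RV v w

/-- Applicative similarity on computations. -/
def AppSimC (t s : C) : Prop := ∃ RV RC, IsSim RV RC ∧ RC t s

/-- A sorted relation is a congruence if it is compatible with all operators of both sorts. -/
def IsCong (RV : V → V → Prop) (RC : C → C → Prop) : Prop :=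
  RV .S .S ∧ RV .K .K ∧ RV .I .I ∧
  (∀ t s, RC t s → RV (.K1 t) (.K1 s)) ∧
  (∀ t s, RC t s → RV (.S1 t) (.S1 s)) ∧
  (∀ t s t' s', RC t s → RC t' s' → RV (.S2 t t') (.S2 s s')) ∧
  (∀ v w, RV v w → RC (.ret v) (.ret w)) ∧
  (∀ t s t' s', RC t s → RC t' s' → RC (.bull t t') (.bull s s')) ∧
  (∀ v w t s, RV v w → RC t s → RC (.rtri v t) (.rtri w s)) ∧
  (∀ v w t s, RV v w → RC t s → RC (.ltri t v) (.ltri s w)) ∧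
  (∀ v w v' w', RV v w → RV v' w' → RC (.circ v v') (.circ w w'))

/-- Containment in the preorder `O` (the value component of `O` is total). -/
def SubO (RV : V → V → Prop) (RC : C → C → Prop) : Prop :=
  (∀ v w, RV v w → True) ∧ (∀ t s, RC t s → ConvC t → ConvC s)

/-- The contextual preorder (value sort): the greatest congruence contained in `O`. -/
def CtxLeV (v w : V) : Prop := ∃ RV RC, IsCong RV RC ∧ SubO RV RC ∧ RV v w

/-- The contextual preorder (computation sort). -/
def CtxLeC (t s : C) : Prop := ∃ RV RC, IsCong RV RC ∧ SubO RV RC ∧ RC t s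

/-- The step-indexed approximations `Lⁿ = (Lⁿ_v, Lⁿ_c)`. -/
def LrelN : ℕ → (V → V → Prop) × (C → C → Prop)
  | 0 => (fun _ _ => True, fun _ _ => True)
  | n+1 =>
    ( fun v w => ∀ u z, (LrelN n).1 u z → ∀ t, LStep v u t →
        ∃ s, LStep w z s ∧ (LrelN n).2 t s,
      fun t s =>
        (∀ v, StepV t v → ∃ w, StepsV s w ∧ (LrelN n).1 v w) ∧
        (∀ t', StepC t t' → ∃ s', StepsC s s' ∧ (LrelN n).2 t' s') )

/-- The step-indexed logical relation, value sort: `L_v = ⋂ₙ Lⁿ_v`. -/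
def LV (v w : V) : Prop := ∀ n, (LrelN n).1 v w

/-- The step-indexed logical relation, computation sort: `L_c = ⋂ₙ Lⁿ_c`. -/
def LC (t s : C) : Prop := ∀ n, (LrelN n).2 t s

end FG

/-!
The proof goes through `Approx n`, a variant of `LrelN` that is downward closed in `n` by
construction. Unfolding level `n + 1` of an operator only asks for level `n` of its arguments,
so every operator preserves each level, and `L = ⋂ₙ Approx n` (`LcumV`, `LcumC`) is a
congruence, in particular reflexive. It lies in `O`: if `t` reaches a value in `k` steps, then
`Approx (k + 1) t s` forces `s⇓`. Finally `Approx n ; R ⊆ Approx n` for every applicative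
simulation `R`, so `p ≲app q` gives `p L p R q`, hence `p L q`, and `L` witnesses `p ≲ctx q`.
-/

namespace FG

theorem StepsC.ltri {t t' : C} (v : V) (h : StepsC t t') : StepsC (.ltri t v) (.ltri t' v) :=
  Relation.ReflTransGen.lift (C.ltri · v) (fun _ _ => StepC.ltriL v) _ _ h

theorem StepsC.rtri {t t' : C} (v : V) (h : StepsC t t') : StepsC (.rtri v t) (.rtri v t') :=
  Relation.ReflTransGen.lift (C.rtri v ·) (fun _ _ => StepC.rtriR v) _ _ h

theorem StepsC.bull {t t' : C} (s : C) (h : StepsC t t') : StepsC (.bull t s) (.bull t' s) :=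
  Relation.ReflTransGen.lift (C.bull · s) (fun _ _ => StepC.bullL s) _ _ h

theorem StepsV.ret (v : V) : StepsV (.ret v) v := ⟨_, .refl, .ret v⟩

theorem StepsV.ltri {t : C} {v : V} (w : V) (h : StepsV t v) : StepsC (.ltri t w) (.circ v w) :=
  let ⟨_, hsteps, hv⟩ := h
  (hsteps.ltri w).tail (.ltriV w hv)

theorem StepsV.rtri {s : C} {w : V} (v : V) (h : StepsV s w) : StepsC (.rtri v s) (.circ v w) :=
  let ⟨_, hsteps, hw⟩ := h
  (hsteps.rtri v).tail (.rtriV v hw)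

theorem StepsV.bull {t : C} {v : V} (s : C) (h : StepsV t v) : StepsC (.bull t s) (.rtri v s) :=
  let ⟨_, hsteps, hv⟩ := h
  (hsteps.bull s).tail (.bullV s hv)

theorem ConvC.of_stepsC {s s' : C} (h : StepsC s s') (hconv : ConvC s') : ConvC s :=
  let ⟨w, _, hsteps, hw⟩ := hconv
  ⟨w, _, h.trans hsteps, hw⟩

theorem IsSim.stepsC {RV : V → V → Prop} {RC : C → C → Prop} (hR : IsSim RV RC) {t t' s : C}
    (h : StepsC t t') (hts : RC t s) : ∃ s', StepsC s s' ∧ RC t' s' := by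
  induction h with
  | refl => exact ⟨s, .refl, hts⟩
  | tail _ hstep ih =>
    obtain ⟨s₁, hs₁, hr₁⟩ := ih
    obtain ⟨s₂, hs₂, hr₂⟩ := (hR.2 _ _ hr₁).2 _ hstep
    exact ⟨s₂, hs₁.trans hs₂, hr₂⟩

def Approx : ℕ → (V → V → Prop) × (C → C → Prop)
  | 0 => (fun _ _ => True, fun _ _ => True)
  | n+1 =>
    ( fun v w => (Approx n).1 v w ∧ ∀ u z, (Approx n).1 u z → ∀ t, LStep v u t →
        ∃ s, LStep w z s ∧ (Approx n).2 t s,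
      fun t s => (Approx n).2 t s ∧
        (∀ v, StepV t v → ∃ w, StepsV s w ∧ (Approx n).1 v w) ∧
        (∀ t', StepC t t' → ∃ s', StepsC s s' ∧ (Approx n).2 t' s') )

def ApproxV (n : ℕ) : V → V → Prop := (Approx n).1

def ApproxC (n : ℕ) : C → C → Prop := (Approx n).2

section Unfolding

variable {n : ℕ} {v w : V} {t s : C}

theorem approxV_succ : ApproxV (n+1) v w ↔
    ApproxV n v w ∧
      ∀ u z, ApproxV n u z → ∀ t, LStep v u t → ∃ s, LStep w z s ∧ ApproxC n t s :=
  Iff.rfl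

theorem approxC_succ : ApproxC (n+1) t s ↔
    ApproxC n t s ∧ (∀ v, StepV t v → ∃ w, StepsV s w ∧ ApproxV n v w) ∧
      (∀ t', StepC t t' → ∃ s', StepsC s s' ∧ ApproxC n t' s') :=
  Iff.rfl

theorem ApproxV.of_succ (h : ApproxV (n+1) v w) : ApproxV n v w := h.1

theorem ApproxC.of_succ (h : ApproxC (n+1) t s) : ApproxC n t s := h.1

theorem ApproxV.lStep (h : ApproxV (n+1) v w) {u z : V} (huz : ApproxV n u z) {t : C}
    (ht : LStep v u t) : ∃ s, LStep w z s ∧ ApproxC n t s :=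
  h.2 u z huz t ht

theorem ApproxC.stepV (h : ApproxC (n+1) t s) {v : V} (hv : StepV t v) :
    ∃ w, StepsV s w ∧ ApproxV n v w :=
  h.2.1 v hv

theorem ApproxC.stepC (h : ApproxC (n+1) t s) {t' : C} (ht : StepC t t') :
    ∃ s', StepsC s s' ∧ ApproxC n t' s' :=
  h.2.2 t' ht

end Unfolding

theorem approxC_ret : ∀ {n : ℕ} {v w : V}, ApproxV n v w → ApproxC n (.ret v) (.ret w)
  | 0, _, _, _ => trivial
  | _+1, _, w, h => approxC_succ.mpr
    ⟨approxC_ret h.of_succ, fun _ hv => by cases hv; exact ⟨w, .ret w, h.of_succ⟩,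
      nofun⟩

theorem approxC_circ : ∀ {n : ℕ} {v w v' w' : V}, ApproxV n v w → ApproxV n v' w' →
    ApproxC n (.circ v v') (.circ w w')
  | 0, _, _, _, _, _, _ => trivial
  | _+1, _, _, _, _, h, h' => by
    refine approxC_succ.mpr ⟨approxC_circ h.of_succ h'.of_succ, nofun, ?_⟩
    intro _ ht
    cases ht with
    | circ hl =>
      obtain ⟨s, hs, hts⟩ := h.lStep h'.of_succ hl
      exact ⟨s, .single (.circ hs), hts⟩

theorem approxC_ltri : ∀ {n : ℕ} {t s : C} {v w : V}, ApproxC n t s → ApproxV n v w →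
    ApproxC n (.ltri t v) (.ltri s w)
  | 0, _, _, _, _, _, _ => trivial
  | _+1, _, _, _, w, h, hvw => by
    refine approxC_succ.mpr ⟨approxC_ltri h.of_succ hvw.of_succ, nofun, ?_⟩
    intro _ ht
    cases ht with
    | ltriL _ hstep =>
      obtain ⟨s', hs', hts'⟩ := h.stepC hstep
      exact ⟨_, hs'.ltri w, approxC_ltri hts' hvw.of_succ⟩
    | ltriV _ hval =>
      obtain ⟨v', hv', hvv'⟩ := h.stepV hval
      exact ⟨_, hv'.ltri w, approxC_circ hvv' hvw.of_succ⟩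

theorem approxC_rtri : ∀ {n : ℕ} {v w : V} {t s : C}, ApproxV n v w → ApproxC n t s →
    ApproxC n (.rtri v t) (.rtri w s)
  | 0, _, _, _, _, _, _ => trivial
  | _+1, _, w, _, _, hvw, h => by
    refine approxC_succ.mpr ⟨approxC_rtri hvw.of_succ h.of_succ, nofun, ?_⟩
    intro _ ht
    cases ht with
    | rtriR _ hstep =>
      obtain ⟨s', hs', hts'⟩ := h.stepC hstep
      exact ⟨_, hs'.rtri w, approxC_rtri hvw.of_succ hts'⟩
    | rtriV _ hval =>
      obtain ⟨w', hw', hww'⟩ := h.stepV hval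
      exact ⟨_, hw'.rtri w, approxC_circ hvw.of_succ hww'⟩

theorem approxC_bull : ∀ {n : ℕ} {t s t' s' : C}, ApproxC n t s → ApproxC n t' s' →
    ApproxC n (.bull t t') (.bull s s')
  | 0, _, _, _, _, _, _ => trivial
  | _+1, _, _, _, s', h, h' => by
    refine approxC_succ.mpr ⟨approxC_bull h.of_succ h'.of_succ, nofun, ?_⟩
    intro _ ht
    cases ht with
    | bullL _ hstep =>
      obtain ⟨s₁, hs₁, hts₁⟩ := h.stepC hstep
      exact ⟨_, hs₁.bull s', approxC_bull hts₁ h'.of_succ⟩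
    | bullV _ hval =>
      obtain ⟨w, hw, hvw⟩ := h.stepV hval
      exact ⟨_, hw.bull s', approxC_rtri hvw h'.of_succ⟩

theorem approxV_K1 : ∀ {n : ℕ} {t s : C}, ApproxC n t s → ApproxV n (.K1 t) (.K1 s)
  | 0, _, _, _ => trivial
  | _+1, _, s, h => approxV_succ.mpr
    ⟨approxV_K1 h.of_succ, fun _ z _ _ hl => by cases hl; exact ⟨s, .K1 s z, h.of_succ⟩⟩

theorem approxV_S2 : ∀ {n : ℕ} {t s t' s' : C}, ApproxC n t s → ApproxC n t' s' →
    ApproxV n (.S2 t t') (.S2 s s')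
  | 0, _, _, _, _, _, _ => trivial
  | _+1, _, s, _, s', h, h' => approxV_succ.mpr
    ⟨approxV_S2 h.of_succ h'.of_succ, fun _ z huz _ hl => by
      cases hl
      exact ⟨_, .S2 s s' z,
        approxC_bull (approxC_ltri h.of_succ huz) (approxC_ltri h'.of_succ huz)⟩⟩

theorem approxV_S1 : ∀ {n : ℕ} {t s : C}, ApproxC n t s → ApproxV n (.S1 t) (.S1 s)
  | 0, _, _, _ => trivial
  | _+1, _, s, h => approxV_succ.mpr
    ⟨approxV_S1 h.of_succ, fun _ z huz _ hl => by
      cases hl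
      exact ⟨_, .S1 s z, approxC_ret (approxV_S2 h.of_succ (approxC_ret huz))⟩⟩

theorem approxV_S : ∀ {n : ℕ}, ApproxV n .S .S
  | 0 => trivial
  | _+1 => approxV_succ.mpr
    ⟨approxV_S, fun _ z huz _ hl => by
      cases hl
      exact ⟨_, .S z, approxC_ret (approxV_S1 (approxC_ret huz))⟩⟩

theorem approxV_K : ∀ {n : ℕ}, ApproxV n .K .K
  | 0 => trivial
  | _+1 => approxV_succ.mpr
    ⟨approxV_K, fun _ z huz _ hl => by
      cases hl
      exact ⟨_, .K z, approxC_ret (approxV_K1 (approxC_ret huz))⟩⟩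

theorem approxV_I : ∀ {n : ℕ}, ApproxV n .I .I
  | 0 => trivial
  | _+1 => approxV_succ.mpr
    ⟨approxV_I, fun _ z huz _ hl => by cases hl; exact ⟨_, .I z, approxC_ret huz⟩⟩

mutual
theorem approxV_refl {n : ℕ} : ∀ v : V, ApproxV n v v
  | .I => approxV_I
  | .K => approxV_K
  | .S => approxV_S
  | .K1 t => approxV_K1 (approxC_refl t)
  | .S1 t => approxV_S1 (approxC_refl t)
  | .S2 t s => approxV_S2 (approxC_refl t) (approxC_refl s)

theorem approxC_refl {n : ℕ} : ∀ t : C, ApproxC n t t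
  | .ret v => approxC_ret (approxV_refl v)
  | .bull t s => approxC_bull (approxC_refl t) (approxC_refl s)
  | .rtri v s => approxC_rtri (approxV_refl v) (approxC_refl s)
  | .ltri t v => approxC_ltri (approxC_refl t) (approxV_refl v)
  | .circ v w => approxC_circ (approxV_refl v) (approxV_refl w)
end

section Simulation

variable {RV : V → V → Prop} {RC : C → C → Prop}

theorem approx_trans_sim (hR : IsSim RV RC) : ∀ n : ℕ,
    (∀ {v v' w}, ApproxV n v v' → RV v' w → ApproxV n v w) ∧
    (∀ {t t' s}, ApproxC n t t' → RC t' s → ApproxC n t s)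
  | 0 => ⟨fun _ _ => trivial, fun _ _ => trivial⟩
  | n+1 => by
    obtain ⟨ihV, ihC⟩ := approx_trans_sim hR n
    constructor
    · intro v v' w hv hr
      refine approxV_succ.mpr ⟨ihV hv.of_succ hr, fun u z huz t hl => ?_⟩
      obtain ⟨t', hl', htt'⟩ := hv.lStep huz hl
      obtain ⟨s, hs, ht's⟩ := hR.1 _ _ hr _ _ hl'
      exact ⟨s, hs, ihC htt' ht's⟩
    · intro t t' s ht hr
      refine approxC_succ.mpr ⟨ihC ht.of_succ hr, fun v hv => ?_, fun t₁ hstep => ?_⟩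
      · obtain ⟨v', ⟨t₁, ht₁, hv'⟩, hvv'⟩ := ht.stepV hv
        obtain ⟨s₁, hs₁, hr₁⟩ := hR.stepsC ht₁ hr
        obtain ⟨w, ⟨s₂, hs₂, hw⟩, hr₂⟩ := (hR.2 _ _ hr₁).1 v' hv'
        exact ⟨w, ⟨s₂, hs₁.trans hs₂, hw⟩, ihV hvv' hr₂⟩
      · obtain ⟨t₂, ht₂, ht₁₂⟩ := ht.stepC hstep
        obtain ⟨s₂, hs₂, hr₂⟩ := hR.stepsC ht₂ hr
        exact ⟨s₂, hs₂, ihC ht₁₂ hr₂⟩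

end Simulation

theorem ConvC.exists_approxC {t : C} (ht : ConvC t) :
    ∃ k, ∀ s, ApproxC k t s → ConvC s := by
  obtain ⟨v, t₁, hsteps, hv⟩ := ht
  induction hsteps using Relation.ReflTransGen.head_induction_on with
  | refl => exact ⟨1, fun s hs => let ⟨w, hw, _⟩ := hs.stepV hv; ⟨w, hw⟩⟩
  | head hstep _ ih =>
    obtain ⟨k, hk⟩ := ih
    refine ⟨k + 1, fun s hs => ?_⟩
    obtain ⟨s', hs', hts'⟩ := hs.stepC hstep
    exact (hk s' hts').of_stepsC hs'

def LcumV (v w : V) : Prop := ∀ n, ApproxV n v w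

def LcumC (t s : C) : Prop := ∀ n, ApproxC n t s

theorem isCong_lcum : IsCong LcumV LcumC :=
  ⟨fun _ => approxV_S, fun _ => approxV_K, fun _ => approxV_I,
    fun _ _ h n => approxV_K1 (h n),
    fun _ _ h n => approxV_S1 (h n),
    fun _ _ _ _ h h' n => approxV_S2 (h n) (h' n),
    fun _ _ h n => approxC_ret (h n),
    fun _ _ _ _ h h' n => approxC_bull (h n) (h' n),
    fun _ _ _ _ h h' n => approxC_rtri (h n) (h' n),
    fun _ _ _ _ h h' n => approxC_ltri (h' n) (h n),
    fun _ _ _ _ h h' n => approxC_circ (h n) (h' n)⟩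

theorem subO_lcum : SubO LcumV LcumC :=
  ⟨fun _ _ _ => trivial, fun _ s hts ht =>
    let ⟨k, hk⟩ := ht.exists_approxC
    hk s (hts k)⟩

theorem lcumV_of_appSimV {v w : V} (h : AppSimV v w) : LcumV v w :=
  let ⟨_, _, hR, hvw⟩ := h
  fun n => (approx_trans_sim hR n).1 (approxV_refl v) hvw

theorem lcumC_of_appSimC {t s : C} (h : AppSimC t s) : LcumC t s :=
  let ⟨_, _, hR, hts⟩ := h
  fun n => (approx_trans_sim hR n).2 (approxC_refl t) hts

end FG

open FG in
/-- Applicative similarity for xCL_fg is sound for the contextual preorder. -/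
theorem fg_appSim_sound :
    (∀ v w : V, AppSimV v w → CtxLeV v w) ∧
    (∀ t s : C, AppSimC t s → CtxLeC t s) :=
  ⟨fun _ _ h => ⟨LcumV, LcumC, isCong_lcum, subO_lcum, lcumV_of_appSimV h⟩,
    fun _ _ h => ⟨LcumV, LcumC, isCong_lcum, subO_lcum, lcumC_of_appSimC h⟩⟩
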